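/- arXiv:2503.20547 — 5 statements merged into one kernel-verified Lean document; each statement's English description precedes it below -/
import Mathlib

section
/- Let A be a real symmetric n×n matrix and O a real orthogonal n×n matrix. Let (1+A²)^{-1/2} denote the inverse of the unique positive-definite square root of the positive-definite matrix 1+A², and set X = (1+A²)^{-1/2} O and Y = A(1+A²)^{-1/2} O. Then the complex n×n matrix U = X + iY is unitary. -/
/-! For real `X`, `Y`, `(X + iY)* (X + iY) = (XᵀX + YᵀY) + i (XᵀY - YᵀX)`, so `X + iY` is unitary
as soon as `XᵀX + YᵀY = 1` and `XᵀY` is symmetric. With `B = (1+A²)^{-1/2}` symmetric and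
`B (1 + A²) B = 1`, the first is `Oᵀ B (1 + A²) B O = OᵀO = 1`, and both `XᵀY` and `YᵀX`
equal `Oᵀ B A B O`. -/

open Matrix

noncomputable section

/-- For a real symmetric matrix `A`, the matrix `1 + A²` is positive definite. -/
theorem onePlusSq_posDef {n : ℕ} (A : Matrix (Fin n) (Fin n) ℝ) (hA : Aᵀ = A) :
    (1 + A * A).PosDef := by
  have h2 : (A * A).PosSemidef := by
    have h := Matrix.posSemidef_conjTranspose_mul_self A
    simpa [Matrix.conjTranspose_eq_transpose_of_trivial, hA] using h
  exact Matrix.PosDef.add_posSemidef Matrix.PosDef.one h2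

open scoped MatrixOrder Matrix.Norms.L2Operator in
/-- `(1 + A²)^{-1/2}`: the inverse of the unique positive-definite square root of `1 + A²`. -/
def invSqrtOnePlusSq {n : ℕ} (A : Matrix (Fin n) (Fin n) ℝ) (hA : Aᵀ = A) :
    Matrix (Fin n) (Fin n) ℝ :=
  (CFC.sqrt (1 + A * A))⁻¹

namespace Matrix

section InvSqrt

open scoped ComplexOrder MatrixOrder Matrix.Norms.L2Operator

variable {m 𝕜 : Type*} [Fintype m] [DecidableEq m] [RCLike 𝕜]

theorem isHermitian_inv_cfcSqrt (M : Matrix m m 𝕜) : (CFC.sqrt M)⁻¹.IsHermitian := by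
  rw [IsHermitian, conjTranspose_nonsing_inv, (CFC.sqrt_nonneg M).posSemidef.isHermitian.eq]

theorem PosDef.inv_cfcSqrt_mul_mul_inv_cfcSqrt {M : Matrix m m 𝕜} (hM : M.PosDef) :
    (CFC.sqrt M)⁻¹ * M * (CFC.sqrt M)⁻¹ = 1 := by
  set S := CFC.sqrt M
  have hS : IsUnit S.det :=
    (isUnit_iff_isUnit_det S).1 ((CFC.isUnit_sqrt_iff M hM.posSemidef.nonneg).2 hM.isUnit)
  calc S⁻¹ * M * S⁻¹ = S⁻¹ * (S * S) * S⁻¹ := by rw [CFC.sqrt_mul_sqrt_self M hM.posSemidef.nonneg]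
    _ = (S⁻¹ * S) * (S * S⁻¹) := by simp only [Matrix.mul_assoc]
    _ = 1 := by rw [nonsing_inv_mul S hS, mul_nonsing_inv S hS, Matrix.one_mul]

end InvSqrt

theorem conjTranspose_map_ofReal {m n : Type*} (M : Matrix m n ℝ) :
    (M.map Complex.ofReal)ᴴ = Mᵀ.map Complex.ofReal := by
  rw [← conjTranspose_map _ (fun _ => by simp), conjTranspose_eq_transpose_of_trivial]

variable {m : Type*} [Fintype m]

theorem star_map_add_I_smul_map_mul_self (X Y : Matrix m m ℝ) :
    star (X.map Complex.ofReal + Complex.I • Y.map Complex.ofReal) *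
        (X.map Complex.ofReal + Complex.I • Y.map Complex.ofReal) =
      (Xᵀ * X + Yᵀ * Y).map Complex.ofReal + Complex.I • (Xᵀ * Y - Yᵀ * X).map Complex.ofReal := by
  have map_mul' (M N : Matrix m m ℝ) :
      (M * N).map Complex.ofReal = M.map Complex.ofReal * N.map Complex.ofReal :=
    Matrix.map_mul (f := Complex.ofRealHom)
  rw [Matrix.map_add _ Complex.ofReal_add, Matrix.map_sub _ Complex.ofReal_sub]
  simp only [star_eq_conjTranspose, conjTranspose_add, conjTranspose_smul,
    conjTranspose_map_ofReal, Complex.star_def, Complex.conj_I, map_mul',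
    add_mul, mul_add, Matrix.smul_mul, Matrix.mul_smul, smul_smul, Complex.I_mul_I, neg_mul,
    smul_sub, neg_smul, one_smul]
  abel

theorem map_add_I_smul_map_mem_unitaryGroup [DecidableEq m] {X Y : Matrix m m ℝ}
    (h₁ : Xᵀ * X + Yᵀ * Y = 1) (h₂ : Xᵀ * Y = Yᵀ * X) :
    X.map Complex.ofReal + Complex.I • Y.map Complex.ofReal ∈ unitaryGroup m ℂ := by
  rw [mem_unitaryGroup_iff', star_map_add_I_smul_map_mul_self, h₁, h₂, sub_self]
  simp

end Matrix

/-- If `A` is real symmetric, `O` is real orthogonal, `X = (1+A²)^{-1/2} O` and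
`Y = A (1+A²)^{-1/2} O`, then the complex matrix `U = X + iY` is unitary. -/
theorem passive_unitary_of_cluster {n : ℕ} (A O : Matrix (Fin n) (Fin n) ℝ)
    (hA : Aᵀ = A) (hO : Oᵀ * O = 1) :
    (((invSqrtOnePlusSq A hA * O).map Complex.ofReal) +
        Complex.I • ((A * invSqrtOnePlusSq A hA * O).map Complex.ofReal)) ∈
      Matrix.unitaryGroup (Fin n) ℂ := by
  set B := invSqrtOnePlusSq A hA
  have hB : Bᵀ = B := by
    rw [← conjTranspose_eq_transpose_of_trivial]
    exact isHermitian_inv_cfcSqrt (1 + A * A)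
  have hBB : B * (1 + A * A) * B = 1 := (onePlusSq_posDef A hA).inv_cfcSqrt_mul_mul_inv_cfcSqrt
  apply map_add_I_smul_map_mem_unitaryGroup
  · calc (B * O)ᵀ * (B * O) + (A * B * O)ᵀ * (A * B * O) = Oᵀ * (B * (1 + A * A) * B) * O := by
          simp only [transpose_mul, hA, hB]; noncomm_ring
      _ = 1 := by rw [hBB, Matrix.mul_one, hO]
  · simp only [transpose_mul, hA, hB, Matrix.mul_assoc]
end
end

section
/- Let λ, μ be real numbers with λ > 0 and λ² − μ² = 1, and let Γ_EPR(λ,μ) be the 4×4 matrix [[λ,0,0,μ],[0,λ,μ,0],[0,μ,λ,0],[μ,0,0,λ]]. Then the characteristic polynomial of the complex matrix Ω₂ · Γ_EPR(λ,μ) equals (X² + 1)². Equivalently, the two symplectic eigenvalues of Γ_EPR(λ,μ) both equal 1 (the state is pure). -/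
open Matrix Polynomial

/-!
With `J` the swap matrix, `Ω₂ Γ_EPR(λ,μ)` is the block matrix `[[μJ, λ], [-λ, -μJ]]`, and
`J² = 1`. The off-diagonal blocks of its characteristic matrix are scalar, so they commute with
the diagonal ones, and the determinant reduces to
`det ((X - μJ)(X + μJ) + λ²) = det ((X² + λ² - μ²) • 1) = (X² + 1)²`.
-/

noncomputable section

/-- The standard symplectic form `Ω_n` in quadrature ordering `(Q₁,…,Qₙ,P₁,…,Pₙ)`. -/
def Omega (n : ℕ) : Matrix (Fin n ⊕ Fin n) (Fin n ⊕ Fin n) ℝ :=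
  Matrix.fromBlocks 0 1 (-1) 0

/-- The 4×4 EPR covariance matrix with diagonal entries `l` and antidiagonal
entries `m`, in ordering `(Q₁,Q₂,P₁,P₂)`. -/
def GammaEPR (l m : ℝ) : Matrix (Fin 2 ⊕ Fin 2) (Fin 2 ⊕ Fin 2) ℝ :=
  Matrix.fromBlocks (l • 1) (m • !![0,1;1,0]) (m • !![0,1;1,0]) (l • 1)

theorem Omega_mul_fromBlocks {n : ℕ} (A B C D : Matrix (Fin n) (Fin n) ℝ) :
    Omega n * fromBlocks A B C D = fromBlocks C D (-A) (-B) := by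
  simp [Omega, fromBlocks_multiply]

namespace Matrix

variable {n R : Type*} [Fintype n] [DecidableEq n] [CommRing R] [IsDomain R]

theorem det_fromBlocks_of_commute (A B C D : Matrix n n R) (hCD : Commute C D)
    (hD : D.det ≠ 0) : (fromBlocks A B C D).det = (A * D - B * C).det := by
  have hmul : fromBlocks A B C D * fromBlocks D 0 (-C) 1 = fromBlocks (A * D - B * C) B 0 D := by
    simp [fromBlocks_multiply, hCD.eq, sub_eq_add_neg]
  have hdet := congrArg det hmul
  rw [det_mul, det_fromBlocks_zero₁₂, det_fromBlocks_zero₂₁, det_one, mul_one] at hdet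
  exact mul_right_cancel₀ hD hdet

theorem charpoly_fromBlocks_of_mul_self_eq_one {J : Matrix n n R} (hJ : J * J = 1) (l m : R) :
    (fromBlocks (m • J) (l • 1) (-(l • 1)) (-(m • J))).charpoly =
      (X ^ 2 + C (l ^ 2 - m ^ 2)) ^ Fintype.card n := by
  set K := J.map C
  have hK : K * K = 1 := by
    rw [← Matrix.map_mul, hJ, Matrix.map_one _ (map_zero C) (map_one C)]
  have hcharmatrix : charmatrix (-(m • J)) = scalar n X + C m • K := by
    simp [charmatrix, sub_eq_add_neg, K, Matrix.map_neg _ (map_neg (C : R →+* R[X])),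
      map_smul' _ _ _ (map_mul (C : R →+* R[X]))]
  have hblocks : charmatrix (fromBlocks (m • J) (l • 1) (-(l • 1)) (-(m • J))) =
      fromBlocks (scalar n X - C m • K) (-(C l • 1)) (C l • 1) (scalar n X + C m • K) := by
    rw [charmatrix_fromBlocks, ← hcharmatrix]
    simp [charmatrix, K, Matrix.map_neg _ (map_neg (C : R →+* R[X])),
      map_smul' _ _ _ (map_mul (C : R →+* R[X])),
      Matrix.map_one _ (map_zero (C : R →+* R[X])) (map_one (C : R →+* R[X]))]
  have hschur : (scalar n X - C m • K) * (scalar n X + C m • K) - -(C l • 1) * (C l • 1) =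
      (X ^ 2 + C (l ^ 2 - m ^ 2)) • (1 : Matrix n n R[X]) := by
    rw [scalar_apply, ← smul_one_eq_diagonal]
    simp only [sub_mul, mul_add, neg_mul, smul_mul_smul_comm, hK, one_mul, mul_one, C_sub, C_pow]
    module
  have hdet : (scalar n X + C m • K).det ≠ 0 := hcharmatrix ▸ (charpoly_monic _).ne_zero
  rw [charpoly, hblocks,
    det_fromBlocks_of_commute _ _ _ _ ((Commute.one_left _).smul_left _) hdet,
    hschur, det_smul, det_one, mul_one]

end Matrix

theorem charpoly_GammaEPR_general (l m : ℝ) (hlm : l ^ 2 - m ^ 2 = 1) :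
    ((Omega 2 * GammaEPR l m).map Complex.ofReal).charpoly = (X ^ 2 + 1) ^ 2 := by
  have hJ : !![(0 : ℝ), 1; 1, 0] * !![0, 1; 1, 0] = 1 := by
    simp [one_fin_two]
  refine (charpoly_map _ Complex.ofRealHom).trans ?_
  rw [GammaEPR, Omega_mul_fromBlocks, charpoly_fromBlocks_of_mul_self_eq_one hJ, hlm]
  simp

/-- If `λ > 0` and `λ² − μ² = 1`, the characteristic polynomial of `Ω₂ Γ_EPR(λ,μ)`
over `ℂ` is `(X² + 1)²`: both symplectic eigenvalues of `Γ_EPR(λ,μ)` equal 1,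
i.e. the state is pure. -/
theorem charpoly_GammaEPR (l m : ℝ) (hl : 0 < l) (hlm : l ^ 2 - m ^ 2 = 1) :
    ((Omega 2 * GammaEPR l m).map Complex.ofReal).charpoly = (X ^ 2 + 1) ^ 2 :=
  charpoly_GammaEPR_general l m hlm
end
end

section
/- Let Γ be a positive-definite real 2n×2n matrix, S a real symplectic 2n×2n matrix, and λ > 0. Suppose Γ' = SΓSᵀ has its first mode in a decoupled thermal state with photon-number parameter λ: the (Q₁,Q₁) and (P₁,P₁) entries of Γ' equal λ, and every other entry of Γ' in the Q₁-row and in the P₁-row (and the corresponding columns) is zero. Then λ is a symplectic eigenvalue of Γ, i.e. iλ is an eigenvalue of the complex matrix Ω_nΓ. -/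
/-!
Since `Sᵀ Ω S = Ω`, we have `(Ω Γ) Sᵀ = Sᵀ (Ω Γ')` with `Γ' = S Γ Sᵀ`, and `Sᵀ` is invertible, so
`Ω Γ` and `Ω Γ'` are similar and have the same spectrum. A decoupled thermal first mode means
`Γ'` acts as `λ` on `Q₁` and `P₁`, and `Ω` maps `Q₁ + i P₁` to `i (Q₁ + i P₁)`; hence
`Q₁ + i P₁` is an eigenvector of `Ω Γ'` for the eigenvalue `iλ`.
-/

open Matrix

noncomputable section

open Complex

lemma spectrum_eq_of_mul_eq_mul {R A : Type*} [CommSemiring R] [Ring A] [Algebra R A]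
    {a b t : A} (ht : IsUnit t) (h : a * t = t * b) : spectrum R a = spectrum R b := by
  lift t to Aˣ using ht
  rw [← spectrum.units_conjugate (u := t) (a := b), ← h, mul_assoc, Units.mul_inv, mul_one]

lemma Matrix.mem_spectrum_of_mulVec_eq_smul {K ι : Type*} [Field K] [Fintype ι] [DecidableEq ι]
    {A : Matrix ι ι K} {μ : K} {v : ι → K} (hv : v ≠ 0) (h : A *ᵥ v = μ • v) :
    μ ∈ spectrum K A := by
  rw [← spectrum_toLin']
  exact (Module.End.hasEigenvalue_of_hasEigenvector
    (Module.End.hasEigenvector_iff.2 ⟨by simpa using h, hv⟩)).mem_spectrum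

lemma Omega_eq_neg_J (n : ℕ) : Omega n = -J (Fin n) ℝ := by
  simp [Omega, J, fromBlocks_neg]

lemma mem_symplecticGroup_of_transpose_mul_Omega_mul {n : ℕ}
    {S : Matrix (Fin n ⊕ Fin n) (Fin n ⊕ Fin n) ℝ} (hS : Sᵀ * Omega n * S = Omega n) :
    S ∈ symplecticGroup (Fin n) ℝ := by
  rw [SymplecticGroup.mem_iff']
  simpa [Omega_eq_neg_J] using hS

lemma Omega_mul_mul_transpose {n : ℕ} {S : Matrix (Fin n ⊕ Fin n) (Fin n ⊕ Fin n) ℝ}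
    (hS : Sᵀ * Omega n * S = Omega n) (Γ : Matrix (Fin n ⊕ Fin n) (Fin n ⊕ Fin n) ℝ) :
    Omega n * Γ * Sᵀ = Sᵀ * (Omega n * (S * Γ * Sᵀ)) := by
  conv_lhs => rw [← hS]
  noncomm_ring

lemma map_ofReal_mul {ι : Type*} [Fintype ι] (A B : Matrix ι ι ℝ) :
    (A * B).map ofReal = A.map ofReal * B.map ofReal :=
  Matrix.map_mul (f := ofRealHom)

lemma spectrum_Omega_mul_symplectic_congr {n : ℕ} {S : Matrix (Fin n ⊕ Fin n) (Fin n ⊕ Fin n) ℝ}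
    (hS : Sᵀ * Omega n * S = Omega n) (Γ : Matrix (Fin n ⊕ Fin n) (Fin n ⊕ Fin n) ℝ) :
    spectrum ℂ ((Omega n * Γ).map ofReal) = spectrum ℂ ((Omega n * (S * Γ * Sᵀ)).map ofReal) := by
  have hSt : IsUnit Sᵀ := (isUnit_iff_isUnit_det _).2 <| SymplecticGroup.symplectic_det <|
    SymplecticGroup.transpose_mem (mem_symplecticGroup_of_transpose_mul_Omega_mul hS)
  refine spectrum_eq_of_mul_eq_mul (t := Sᵀ.map ofReal) (hSt.map ofRealHom.mapMatrix) ?_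
  rw [← map_ofReal_mul, ← map_ofReal_mul, Omega_mul_mul_transpose hS]

-- The complex amplitude `Q_j + i P_j` of the `j`-th mode.
def modeVec {n : ℕ} (j : Fin n) : Fin n ⊕ Fin n → ℂ :=
  Pi.single (Sum.inl j) 1 + I • Pi.single (Sum.inr j) 1

lemma modeVec_ne_zero {n : ℕ} (j : Fin n) : modeVec j ≠ 0 := by
  intro h
  simpa [modeVec] using congrFun h (Sum.inl j)

lemma Omega_map_mulVec_modeVec {n : ℕ} (j : Fin n) :
    (Omega n).map ofReal *ᵥ modeVec j = I • modeVec j := by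
  rw [modeVec, mulVec_add, mulVec_smul, mulVec_single_one, mulVec_single_one]
  ext (k | k) <;> by_cases h : k = j <;> simp [Omega, h, one_apply]

lemma mulVec_modeVec_of_mulVec_single {n : ℕ} {A : Matrix (Fin n ⊕ Fin n) (Fin n ⊕ Fin n) ℂ}
    {j : Fin n} {μ : ℂ} (hQ : A *ᵥ Pi.single (Sum.inl j) 1 = μ • Pi.single (Sum.inl j) 1)
    (hP : A *ᵥ Pi.single (Sum.inr j) 1 = μ • Pi.single (Sum.inr j) 1) :
    A *ᵥ modeVec j = μ • modeVec j := by
  rw [modeVec, mulVec_add, mulVec_smul, hQ, hP, smul_add, smul_comm]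

lemma map_mulVec_single_of_col {ι : Type*} [Fintype ι] [DecidableEq ι] {A : Matrix ι ι ℝ} {i : ι}
    {l : ℝ} (hii : A i i = l) (hcol : ∀ u, u ≠ i → A u i = 0) :
    A.map ofReal *ᵥ Pi.single i 1 = (l : ℂ) • Pi.single i 1 := by
  ext u
  by_cases h : u = i
  · simp [h, hii]
  · simp [h, hcol u h]

theorem sympl_eigenvalue_of_decoupled_thermal_mode_general {n : ℕ}
    (Γ S : Matrix (Fin (n + 1) ⊕ Fin (n + 1)) (Fin (n + 1) ⊕ Fin (n + 1)) ℝ)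
    (hS : Sᵀ * Omega (n + 1) * S = Omega (n + 1))
    (l : ℝ)
    (hQQ : (S * Γ * Sᵀ) (Sum.inl 0) (Sum.inl 0) = l)
    (hPP : (S * Γ * Sᵀ) (Sum.inr 0) (Sum.inr 0) = l)
    (hQ : ∀ u, u ≠ Sum.inl 0 →
      (S * Γ * Sᵀ) (Sum.inl 0) u = 0 ∧ (S * Γ * Sᵀ) u (Sum.inl 0) = 0)
    (hP : ∀ u, u ≠ Sum.inr 0 →
      (S * Γ * Sᵀ) (Sum.inr 0) u = 0 ∧ (S * Γ * Sᵀ) u (Sum.inr 0) = 0) :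
    (Complex.I * l) ∈ spectrum ℂ ((Omega (n + 1) * Γ).map Complex.ofReal) := by
  have hthermal : (S * Γ * Sᵀ).map ofReal *ᵥ modeVec 0 = (l : ℂ) • modeVec 0 :=
    mulVec_modeVec_of_mulVec_single (map_mulVec_single_of_col hQQ fun u hu ↦ (hQ u hu).2)
      (map_mulVec_single_of_col hPP fun u hu ↦ (hP u hu).2)
  rw [spectrum_Omega_mul_symplectic_congr hS]
  refine mem_spectrum_of_mulVec_eq_smul (modeVec_ne_zero 0) ?_
  rw [map_ofReal_mul, ← mulVec_mulVec, hthermal, mulVec_smul, Omega_map_mulVec_modeVec, smul_smul,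
    mul_comm]

/-- If after a symplectic transformation `Γ' = S Γ Sᵀ` the first mode is in a
decoupled thermal state with parameter `λ` (diagonal entries `λ` on `Q₁,P₁` and all
other entries of the `Q₁`- and `P₁`-rows/columns zero), then `λ` is a symplectic
eigenvalue of `Γ`, i.e. `iλ` is an eigenvalue of `Ω_n Γ` over `ℂ`. -/
theorem sympl_eigenvalue_of_decoupled_thermal_mode {n : ℕ}
    (Γ S : Matrix (Fin (n + 1) ⊕ Fin (n + 1)) (Fin (n + 1) ⊕ Fin (n + 1)) ℝ)
    (hΓ : Γ.PosDef) (hS : Sᵀ * Omega (n + 1) * S = Omega (n + 1))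
    (l : ℝ) (hl : 0 < l)
    (hQQ : (S * Γ * Sᵀ) (Sum.inl 0) (Sum.inl 0) = l)
    (hPP : (S * Γ * Sᵀ) (Sum.inr 0) (Sum.inr 0) = l)
    (hQ : ∀ u, u ≠ Sum.inl 0 →
      (S * Γ * Sᵀ) (Sum.inl 0) u = 0 ∧ (S * Γ * Sᵀ) u (Sum.inl 0) = 0)
    (hP : ∀ u, u ≠ Sum.inr 0 →
      (S * Γ * Sᵀ) (Sum.inr 0) u = 0 ∧ (S * Γ * Sᵀ) u (Sum.inr 0) = 0) :
    (Complex.I * l) ∈ spectrum ℂ ((Omega (n + 1) * Γ).map Complex.ofReal) :=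
  sympl_eigenvalue_of_decoupled_thermal_mode_general Γ S hS l hQQ hPP hQ hP
end
end

section
/- (No-go criterion for bipartite ideal entanglement routing.) Let n₁, n₂ ≥ 1, and let Γ be a positive-definite real 2(n₁+n₂)×2(n₁+n₂) matrix written in the global ordering (Q^A, P^A, Q^B, P^B), with Alice's reduced covariance matrix Γ_A the 2n₁×2n₁ principal submatrix on (Q^A, P^A) and Bob's Γ_B the 2n₂×2n₂ principal submatrix on (Q^B, P^B). Suppose there exist a symplectic S_A ∈ M_{2n₁}(ℝ) and a symplectic S_B ∈ M_{2n₂}(ℝ) such that, for Γ' = blockdiag(S_A, S_B) · Γ · blockdiag(S_A, S_B)ᵀ, there are an Alice mode a ≤ n₁, a Bob mode b ≤ n₂, and λ > 0, μ ∈ ℝ such that the 4×4 reduced matrix of Γ' on the quadratures (Q_a, Q_b, P_a, P_b) equals Γ_EPR(λ,μ) and all entries of Γ' coupling modes a or b to any other mode vanish. Then λ is a symplectic eigenvalue of Γ_A and also a symplectic eigenvalue of Γ_B, i.e. iλ is an eigenvalue of Ω_{n₁}Γ_A and of Ω_{n₂}Γ_B over ℂ. (Contrapositive: if λ is not in the symplectic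 spectrum of Γ_A, ideal routing of an EPR pair with parameter λ between Alice and Bob is impossible by local symplectic — in particular by local passive — transformations.) -/
open Matrix

noncomputable section

/-- Quadrature indices `(Q_a, Q_b, P_a, P_b)` of Alice's mode `a` and Bob's mode `b`
inside the global ordering `(Qᴬ, Pᴬ, Qᴮ, Pᴮ)`. -/
def pairEmb {n₁ n₂ : ℕ} (a : Fin n₁) (b : Fin n₂) :
    Fin 2 ⊕ Fin 2 → (Fin n₁ ⊕ Fin n₁) ⊕ (Fin n₂ ⊕ Fin n₂)
  | Sum.inl i => if i = 0 then Sum.inl (Sum.inl a) else Sum.inr (Sum.inl b)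
  | Sum.inr i => if i = 0 then Sum.inl (Sum.inr a) else Sum.inr (Sum.inr b)

lemma omega_mul_transpose (n : ℕ) : Omega n * (Omega n)ᵀ = 1 := by
  simp [Omega, Matrix.fromBlocks_transpose, Matrix.fromBlocks_multiply,
    ← Matrix.fromBlocks_one]

lemma isUnit_det_symplectic {n : ℕ} {S : Matrix (Fin n ⊕ Fin n) (Fin n ⊕ Fin n) ℝ}
    (hS : Sᵀ * Omega n * S = Omega n) : IsUnit S.det := by
  have hΩ : IsUnit (Omega n).det :=
    Matrix.isUnit_det_of_right_inverse (omega_mul_transpose n)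
  have h := congrArg Matrix.det hS
  simp only [Matrix.det_mul, Matrix.det_transpose] at h
  rw [isUnit_iff_ne_zero]
  intro h0
  rw [h0] at h
  simp at h
  exact hΩ.ne_zero h.symm

/-- Key lemma: if `G = S Γ_A Sᵀ` with `S` symplectic and the columns of `G` at the
quadratures of mode `a` are `λ`-multiples of the corresponding unit vectors,
then `iλ` is an eigenvalue of `Ω Γ_A` over `ℂ`. -/
lemma sympl_eigen {n : ℕ} (ΓA S G : Matrix (Fin n ⊕ Fin n) (Fin n ⊕ Fin n) ℝ)
    (hS : Sᵀ * Omega n * S = Omega n) (a : Fin n) (l : ℝ)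
    (hG : G = S * ΓA * Sᵀ)
    (hqq : G (Sum.inl a) (Sum.inl a) = l)
    (hqp : G (Sum.inl a) (Sum.inr a) = 0)
    (hpq : G (Sum.inr a) (Sum.inl a) = 0)
    (hpp : G (Sum.inr a) (Sum.inr a) = l)
    (hout : ∀ u, u ≠ Sum.inl a → u ≠ Sum.inr a →
      G u (Sum.inl a) = 0 ∧ G u (Sum.inr a) = 0) :
    (Complex.I * l) ∈ spectrum ℂ ((Omega n * ΓA).map Complex.ofReal) := by
  classical
  set v : (Fin n ⊕ Fin n) → ℂ :=
    Pi.single (Sum.inl a) (1 : ℂ) + Pi.single (Sum.inr a) Complex.I with hvdef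
  have hv : v ≠ 0 := by
    intro h
    have := congrFun h (Sum.inl a)
    simp [hvdef, Pi.single_apply] at this
  have h1 : (G.map Complex.ofReal) *ᵥ v = (l : ℂ) • v := by
    funext u
    simp only [hvdef, Matrix.mulVec_add, Matrix.mulVec_single,
      Pi.add_apply, Pi.smul_apply, smul_eq_mul, Matrix.map_apply]
    rcases u with i | i
    · by_cases hi : i = a
      · subst hi
        simp [hqq, hqp, Pi.single_apply]
      · obtain ⟨e1, e2⟩ := hout (Sum.inl i) (by simp [hi]) (by simp)
        simp [e1, e2, Pi.single_apply, hi]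
    · by_cases hi : i = a
      · subst hi
        simp [hpq, hpp, Pi.single_apply]
      · obtain ⟨e1, e2⟩ := hout (Sum.inr i) (by simp) (by simp [hi])
        simp [e1, e2, Pi.single_apply, hi]
  have h2 : ((Omega n).map Complex.ofReal) *ᵥ v = Complex.I • v := by
    funext u
    simp only [hvdef, Matrix.mulVec_add, Matrix.mulVec_single,
      Pi.add_apply, Pi.smul_apply, smul_eq_mul, Matrix.map_apply, Omega]
    rcases u with i | i <;> by_cases hi : i = a
    · subst hi
      simp [Pi.single_apply, Matrix.one_apply, Matrix.fromBlocks_apply₁₁,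
        Matrix.fromBlocks_apply₁₂]
    · simp [Pi.single_apply, hi, Matrix.one_apply, Matrix.fromBlocks_apply₁₁,
        Matrix.fromBlocks_apply₁₂]
    · subst hi
      simp [Pi.single_apply, Matrix.one_apply, Matrix.fromBlocks_apply₂₁,
        Matrix.fromBlocks_apply₂₂, Matrix.neg_apply]
    · simp [Pi.single_apply, hi, Matrix.one_apply, Matrix.fromBlocks_apply₂₁,
        Matrix.fromBlocks_apply₂₂, Matrix.neg_apply]
  have hmm : ∀ (X Y : Matrix (Fin n ⊕ Fin n) (Fin n ⊕ Fin n) ℝ),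
      (X * Y).map Complex.ofReal = X.map Complex.ofReal * Y.map Complex.ofReal :=
    fun X Y => Matrix.map_mul (f := (Complex.ofRealHom : ℝ →+* ℂ))
  have hreal : Sᵀ * (Omega n * G) = (Omega n * ΓA) * Sᵀ := by
    rw [hG]
    simp only [← Matrix.mul_assoc]
    rw [hS]
  have hC : (Sᵀ.map Complex.ofReal) *
      ((Omega n).map Complex.ofReal * (G.map Complex.ofReal)) =
      ((Omega n).map Complex.ofReal * (ΓA.map Complex.ofReal)) *
        (Sᵀ.map Complex.ofReal) := by
    have h := congrArg (fun M => M.map Complex.ofReal) hreal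
    simp only [hmm] at h
    exact h
  set w : (Fin n ⊕ Fin n) → ℂ := (Sᵀ.map Complex.ofReal) *ᵥ v with hwdef
  have hw : ((Omega n * ΓA).map Complex.ofReal) *ᵥ w = (Complex.I * l) • w := by
    rw [hmm, hwdef, Matrix.mulVec_mulVec, ← hC, ← Matrix.mulVec_mulVec,
      ← Matrix.mulVec_mulVec, h1, Matrix.mulVec_smul, h2, Matrix.mulVec_smul,
      Matrix.mulVec_smul, smul_smul]
    congr 1
    ring
  have hdet : IsUnit (Sᵀ.map Complex.ofReal).det := by
    have hd1 : ((Complex.ofRealHom : ℝ →+* ℂ).mapMatrix Sᵀ).det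
        = Complex.ofRealHom Sᵀ.det := (RingHom.map_det _ _).symm
    have hd2 : IsUnit Sᵀ.det := by
      rw [Matrix.det_transpose]; exact isUnit_det_symplectic hS
    rw [isUnit_iff_ne_zero]
    have heq : ((Complex.ofRealHom : ℝ →+* ℂ).mapMatrix Sᵀ) = Sᵀ.map Complex.ofReal := rfl
    rw [← heq, hd1]
    simpa using hd2.ne_zero
  have hwne : w ≠ 0 := by
    intro h0
    have h := congrArg (fun x => (Sᵀ.map Complex.ofReal)⁻¹ *ᵥ x) h0
    simp only [hwdef, Matrix.mulVec_mulVec, Matrix.nonsing_inv_mul _ hdet,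
      Matrix.one_mulVec, Matrix.mulVec_zero] at h
    exact hv h
  rw [spectrum.mem_iff]
  intro hU
  rw [Matrix.isUnit_iff_isUnit_det] at hU
  have hker : (algebraMap ℂ _ (Complex.I * l) -
      (Omega n * ΓA).map Complex.ofReal) *ᵥ w = 0 := by
    rw [Matrix.sub_mulVec, hw, Algebra.algebraMap_eq_smul_one,
      Matrix.smul_mulVec, Matrix.one_mulVec, sub_self]
  have hdet0 := Matrix.exists_mulVec_eq_zero_iff.mp ⟨w, hwne, hker⟩
  exact hU.ne_zero hdet0

lemma block_inl {n₁ n₂ : ℕ}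
    (A : Matrix (Fin n₁ ⊕ Fin n₁) (Fin n₁ ⊕ Fin n₁) ℝ)
    (B : Matrix (Fin n₂ ⊕ Fin n₂) (Fin n₂ ⊕ Fin n₂) ℝ)
    (Γ : Matrix ((Fin n₁ ⊕ Fin n₁) ⊕ (Fin n₂ ⊕ Fin n₂))
      ((Fin n₁ ⊕ Fin n₁) ⊕ (Fin n₂ ⊕ Fin n₂)) ℝ) :
    (Matrix.fromBlocks A 0 0 B * Γ * (Matrix.fromBlocks A 0 0 B)ᵀ).submatrix
      Sum.inl Sum.inl = A * Γ.submatrix Sum.inl Sum.inl * Aᵀ := by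
  conv_lhs => rw [← Matrix.fromBlocks_toBlocks Γ]
  rw [Matrix.fromBlocks_transpose, Matrix.fromBlocks_multiply, Matrix.fromBlocks_multiply]
  simp only [Matrix.transpose_zero, Matrix.zero_mul, Matrix.mul_zero, add_zero, zero_add]
  ext i j
  rfl

lemma block_inr {n₁ n₂ : ℕ}
    (A : Matrix (Fin n₁ ⊕ Fin n₁) (Fin n₁ ⊕ Fin n₁) ℝ)
    (B : Matrix (Fin n₂ ⊕ Fin n₂) (Fin n₂ ⊕ Fin n₂) ℝ)
    (Γ : Matrix ((Fin n₁ ⊕ Fin n₁) ⊕ (Fin n₂ ⊕ Fin n₂))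
      ((Fin n₁ ⊕ Fin n₁) ⊕ (Fin n₂ ⊕ Fin n₂)) ℝ) :
    (Matrix.fromBlocks A 0 0 B * Γ * (Matrix.fromBlocks A 0 0 B)ᵀ).submatrix
      Sum.inr Sum.inr = B * Γ.submatrix Sum.inr Sum.inr * Bᵀ := by
  conv_lhs => rw [← Matrix.fromBlocks_toBlocks Γ]
  rw [Matrix.fromBlocks_transpose, Matrix.fromBlocks_multiply, Matrix.fromBlocks_multiply]
  simp only [Matrix.transpose_zero, Matrix.zero_mul, Matrix.mul_zero, add_zero, zero_add]
  ext i j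
  rfl

/-- No-go criterion for bipartite ideal entanglement routing: if local symplectic
transformations of the two providers put Alice's mode `a` and Bob's mode `b` in a
decoupled EPR state `Γ_EPR(λ,μ)`, then `λ` is a symplectic eigenvalue of both
reduced covariance matrices `Γ_A` and `Γ_B`. -/
theorem bipartite_routing_no_go {n₁ n₂ : ℕ} (hn₁ : 1 ≤ n₁) (hn₂ : 1 ≤ n₂)
    (Γ : Matrix ((Fin n₁ ⊕ Fin n₁) ⊕ (Fin n₂ ⊕ Fin n₂))
      ((Fin n₁ ⊕ Fin n₁) ⊕ (Fin n₂ ⊕ Fin n₂)) ℝ)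
    (hΓ : Γ.PosDef)
    (S_A : Matrix (Fin n₁ ⊕ Fin n₁) (Fin n₁ ⊕ Fin n₁) ℝ)
    (S_B : Matrix (Fin n₂ ⊕ Fin n₂) (Fin n₂ ⊕ Fin n₂) ℝ)
    (hSA : S_Aᵀ * Omega n₁ * S_A = Omega n₁)
    (hSB : S_Bᵀ * Omega n₂ * S_B = Omega n₂)
    (a : Fin n₁) (b : Fin n₂) (l m : ℝ) (hl : 0 < l)
    (hEPR : (Matrix.fromBlocks S_A 0 0 S_B * Γ *
        (Matrix.fromBlocks S_A 0 0 S_B)ᵀ).submatrix (pairEmb a b) (pairEmb a b) =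
      GammaEPR l m)
    (hdec : ∀ u v,
      u ∈ ({Sum.inl (Sum.inl a), Sum.inl (Sum.inr a), Sum.inr (Sum.inl b),
          Sum.inr (Sum.inr b)} :
        Set ((Fin n₁ ⊕ Fin n₁) ⊕ (Fin n₂ ⊕ Fin n₂))) →
      v ∉ ({Sum.inl (Sum.inl a), Sum.inl (Sum.inr a), Sum.inr (Sum.inl b),
          Sum.inr (Sum.inr b)} :
        Set ((Fin n₁ ⊕ Fin n₁) ⊕ (Fin n₂ ⊕ Fin n₂))) →
      (Matrix.fromBlocks S_A 0 0 S_B * Γ * (Matrix.fromBlocks S_A 0 0 S_B)ᵀ) u v = 0 ∧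
      (Matrix.fromBlocks S_A 0 0 S_B * Γ * (Matrix.fromBlocks S_A 0 0 S_B)ᵀ) v u = 0) :
    (Complex.I * l) ∈
        spectrum ℂ ((Omega n₁ * Γ.submatrix Sum.inl Sum.inl).map Complex.ofReal) ∧
      (Complex.I * l) ∈
        spectrum ℂ ((Omega n₂ * Γ.submatrix Sum.inr Sum.inr).map Complex.ofReal) := by
  classical
  set Γ' := Matrix.fromBlocks S_A 0 0 S_B * Γ * (Matrix.fromBlocks S_A 0 0 S_B)ᵀ with hΓ'
  have hE : ∀ i j, Γ' (pairEmb a b i) (pairEmb a b j) = GammaEPR l m i j := by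
    intro i j
    exact Matrix.ext_iff.mpr hEPR i j
  constructor
  · apply sympl_eigen (Γ.submatrix Sum.inl Sum.inl) S_A (Γ'.submatrix Sum.inl Sum.inl)
      hSA a l
    · rw [hΓ']; exact block_inl S_A S_B Γ
    · have := hE (Sum.inl 0) (Sum.inl 0)
      simpa [pairEmb, GammaEPR, Matrix.one_apply] using this
    · have := hE (Sum.inl 0) (Sum.inr 0)
      simpa [pairEmb, GammaEPR] using this
    · have := hE (Sum.inr 0) (Sum.inl 0)
      simpa [pairEmb, GammaEPR] using this
    · have := hE (Sum.inr 0) (Sum.inr 0)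
      simpa [pairEmb, GammaEPR, Matrix.one_apply] using this
    · intro u hu1 hu2
      have hmem1 : (Sum.inl (Sum.inl a) : (Fin n₁ ⊕ Fin n₁) ⊕ (Fin n₂ ⊕ Fin n₂)) ∈
          ({Sum.inl (Sum.inl a), Sum.inl (Sum.inr a), Sum.inr (Sum.inl b),
            Sum.inr (Sum.inr b)} : Set _) := by simp
      have hmem2 : (Sum.inl (Sum.inr a) : (Fin n₁ ⊕ Fin n₁) ⊕ (Fin n₂ ⊕ Fin n₂)) ∈
          ({Sum.inl (Sum.inl a), Sum.inl (Sum.inr a), Sum.inr (Sum.inl b),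
            Sum.inr (Sum.inr b)} : Set _) := by simp
      have hnot : (Sum.inl u : (Fin n₁ ⊕ Fin n₁) ⊕ (Fin n₂ ⊕ Fin n₂)) ∉
          ({Sum.inl (Sum.inl a), Sum.inl (Sum.inr a), Sum.inr (Sum.inl b),
            Sum.inr (Sum.inr b)} : Set _) := by
        simp [hu1, hu2]
      exact ⟨(hdec _ _ hmem1 hnot).2, (hdec _ _ hmem2 hnot).2⟩
  · apply sympl_eigen (Γ.submatrix Sum.inr Sum.inr) S_B (Γ'.submatrix Sum.inr Sum.inr)
      hSB b l
    · rw [hΓ']; exact block_inr S_A S_B Γ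
    · have := hE (Sum.inl 1) (Sum.inl 1)
      simpa [pairEmb, GammaEPR, Matrix.one_apply] using this
    · have := hE (Sum.inl 1) (Sum.inr 1)
      simpa [pairEmb, GammaEPR] using this
    · have := hE (Sum.inr 1) (Sum.inl 1)
      simpa [pairEmb, GammaEPR] using this
    · have := hE (Sum.inr 1) (Sum.inr 1)
      simpa [pairEmb, GammaEPR, Matrix.one_apply] using this
    · intro u hu1 hu2
      have hmem1 : (Sum.inr (Sum.inl b) : (Fin n₁ ⊕ Fin n₁) ⊕ (Fin n₂ ⊕ Fin n₂)) ∈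
          ({Sum.inl (Sum.inl a), Sum.inl (Sum.inr a), Sum.inr (Sum.inl b),
            Sum.inr (Sum.inr b)} : Set _) := by simp
      have hmem2 : (Sum.inr (Sum.inr b) : (Fin n₁ ⊕ Fin n₁) ⊕ (Fin n₂ ⊕ Fin n₂)) ∈
          ({Sum.inl (Sum.inl a), Sum.inl (Sum.inr a), Sum.inr (Sum.inl b),
            Sum.inr (Sum.inr b)} : Set _) := by simp
      have hnot : (Sum.inr u : (Fin n₁ ⊕ Fin n₁) ⊕ (Fin n₂ ⊕ Fin n₂)) ∉
          ({Sum.inl (Sum.inl a), Sum.inl (Sum.inr a), Sum.inr (Sum.inl b),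
            Sum.inr (Sum.inr b)} : Set _) := by
        simp [hu1, hu2]
      exact ⟨(hdec _ _ hmem1 hnot).2, (hdec _ _ hmem2 hnot).2⟩
end
end

section
/- (Sufficiency of the symplectic-spectrum criterion for graph states with equal squeezing.) Let n = n₁ + n₂ with n₁, n₂ ≥ 1, let s > 0 with s ≠ 1, and let Γ = S · Γ_sqz(n,s) · Sᵀ, where S is a 2n×2n real matrix that is both orthogonal and symplectic (the covariance matrix of a pure Gaussian graph state built from n equally squeezed modes and passive optics). Write Γ in the global ordering (Q^A, P^A, Q^B, P^B) with Alice holding the first n₁ modes and Bob the last n₂, and let Γ_A be Alice's 2n₁×2n₁ reduced covariance matrix. If λ = (s+s⁻¹)/2 is a symplectic eigenvalue of Γ_A (iλ is an eigenvalue of Ω_{n₁}Γ_A over ℂ), then there exist real matrices O_A ∈ M_{2n₁}(ℝ) and O_B ∈ M_{2n₂}(ℝ), each both orthogonal and symplectic, such that Γ' = blockdiag(O_A,O_B) · Γ · blockdiag(O_A,O_B)ᵀ has an Alice mode a ≤ n₁ and a Bob mode b ≤ n₂ whose 4×4 reduced covariance matrix on the quadratures (Q_a, Q_b, P_a, P_b)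 equals Γ_EPR((s+s⁻¹)/2, (s−s⁻¹)/2) and whose covariances with all other modes vanish. That is, ideal routing is achievable by local passive transformations. -/
/-!
Put `λ = (s + s⁻¹)/2`, `μ = (s - s⁻¹)/2` and `K = diag(1,…,1,-1,…,-1)` on each side, so that
`Γ_sqz = λ + μK` and `Γ = λ + μM` with `M = S K Sᵀ`. Since `S` is passive, `M` is symmetric,
`M² = 1` and `M` anticommutes with `Ω`; so does Alice's block `A` of `M` with `Ω_A`, whence
`(Ω_A Γ_A)² = μ²A² - λ²`. An eigenvalue `iλ` of `Ω_A Γ_A` therefore forces `det A = 0`.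

A unit vector `e ∈ ker A` is mapped by `M` to a unit vector `(0, g)` living on Bob's side, and the
anticommutation maps `-Ω(e, 0)` to `Ω(0, g)`. Unitaries with a prescribed column, realified, give
local passive maps sending `(e, 0), -Ω(e, 0), Ω(0, g), (0, g)` to `Q_a, P_a, Q_b, P_b`. In the new
coordinates `M` swaps `Q_a ↔ P_b` and `P_a ↔ Q_b` and is block diagonal with respect to
`{Q_a, P_a, Q_b, P_b}`, which is the EPR form of `λ + μM`.
-/

open Matrix

noncomputable section

/-- Covariance matrix `diag(s,…,s,s⁻¹,…,s⁻¹)` of `n` equally squeezed vacuum modes. -/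
def GammaSqz (n : ℕ) (s : ℝ) : Matrix (Fin n ⊕ Fin n) (Fin n ⊕ Fin n) ℝ :=
  Matrix.fromBlocks (s • 1) 0 0 (s⁻¹ • 1)

/-- The symplectic form in the global ordering `(Qᴬ, Pᴬ, Qᴮ, Pᴮ)`. -/
def OmegaAB (n₁ n₂ : ℕ) :
    Matrix ((Fin n₁ ⊕ Fin n₁) ⊕ (Fin n₂ ⊕ Fin n₂))
      ((Fin n₁ ⊕ Fin n₁) ⊕ (Fin n₂ ⊕ Fin n₂)) ℝ :=
  Matrix.fromBlocks (Omega n₁) 0 0 (Omega n₂)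

/-- The squeezed-vacuum covariance matrix in the global ordering `(Qᴬ, Pᴬ, Qᴮ, Pᴮ)`. -/
def GammaSqzAB (n₁ n₂ : ℕ) (s : ℝ) :
    Matrix ((Fin n₁ ⊕ Fin n₁) ⊕ (Fin n₂ ⊕ Fin n₂))
      ((Fin n₁ ⊕ Fin n₁) ⊕ (Fin n₂ ⊕ Fin n₂)) ℝ :=
  Matrix.fromBlocks (GammaSqz n₁ s) 0 0 (GammaSqz n₂ s)

namespace Matrix

variable {ι : Type*}

/-- The realification `X + iY ↦ [[X, -Y], [Y, X]]`. -/
def realRep (U : Matrix ι ι ℂ) : Matrix (ι ⊕ ι) (ι ⊕ ι) ℝ :=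
  fromBlocks (U.map Complex.re) (-U.map Complex.im) (U.map Complex.im) (U.map Complex.re)

lemma realRep_conjTranspose (U : Matrix ι ι ℂ) : realRep Uᴴ = (realRep U)ᵀ := by
  ext (i | i) (j | j) <;> simp [realRep]

lemma realRep_one [DecidableEq ι] : realRep (1 : Matrix ι ι ℂ) = 1 := by
  ext (i | i) (j | j) <;> simp [realRep, one_apply, apply_ite Complex.im]

lemma realRep_mul [Fintype ι] (U V : Matrix ι ι ℂ) :
    realRep (U * V) = realRep U * realRep V := by
  ext (i | i) (j | j) <;>
    simp [realRep, mul_apply, Complex.re_sum, Complex.im_sum, Finset.sum_add_distrib,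
      sub_eq_add_neg] <;> ring

lemma omega_eq_realRep (n : ℕ) : Omega n = realRep (-Complex.I • 1) := by
  ext (i | i) (j | j) <;>
    simp [Omega, realRep, one_apply, apply_ite Complex.re, apply_ite Complex.im]

lemma exists_mem_unitaryGroup_col_eq [Fintype ι] [DecidableEq ι] (i₀ : ι)
    (u : EuclideanSpace ℂ ι) (hu : ‖u‖ = 1) :
    ∃ U ∈ unitaryGroup ι ℂ, ∀ i, U i i₀ = u i := by
  have hunit : Orthonormal ℂ (({i₀} : Set ι).domRestrict fun _ => u) := by simp [hu]
  obtain ⟨b, hb⟩ := hunit.exists_orthonormalBasis_extension_of_card_eq (by simp)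
  refine ⟨(EuclideanSpace.basisFun ι ℂ).toBasis.toMatrix b,
    (EuclideanSpace.basisFun ι ℂ).toMatrix_orthonormalBasis_mem_unitary b, fun i => ?_⟩
  simp [Module.Basis.toMatrix_apply, hb i₀ rfl]

def IsPassive {n : ℕ} (O : Matrix (Fin n ⊕ Fin n) (Fin n ⊕ Fin n) ℝ) : Prop :=
  Oᵀ * O = 1 ∧ Oᵀ * Omega n * O = Omega n

lemma isPassive_realRep {n : ℕ} {U : Matrix (Fin n) (Fin n) ℂ}
    (hU : U ∈ unitaryGroup (Fin n) ℂ) : IsPassive (realRep U) := by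
  have hUU : Uᴴ * U = 1 := mem_unitaryGroup_iff'.mp hU
  refine ⟨by rw [← realRep_conjTranspose, ← realRep_mul, hUU, realRep_one], ?_⟩
  rw [omega_eq_realRep, ← realRep_conjTranspose, ← realRep_mul, ← realRep_mul, Matrix.mul_smul,
    Matrix.mul_one, Matrix.smul_mul, hUU]

lemma exists_isPassive_row_eq {n : ℕ} (i₀ : Fin n) (e : Fin n ⊕ Fin n → ℝ) (he : e ⬝ᵥ e = 1) :
    ∃ O, IsPassive O ∧ O (.inl i₀) = e ∧ O (.inr i₀) = -(Omega n *ᵥ e) := by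
  set u : EuclideanSpace ℂ (Fin n) := WithLp.toLp 2 fun i => ⟨e (.inl i), e (.inr i)⟩
  have hu : ‖u‖ = 1 := by
    rw [EuclideanSpace.norm_eq, Real.sqrt_eq_one, ← he]
    simp [u, dotProduct, Fintype.sum_sum_type, Complex.sq_norm, Complex.normSq_mk,
      Finset.sum_add_distrib]
  obtain ⟨U, hU, hUcol⟩ := exists_mem_unitaryGroup_col_eq i₀ u hu
  refine ⟨realRep Uᴴ, isPassive_realRep (Unitary.star_mem hU), ?_, ?_⟩ <;>
    ext (j | j) <;>
    simp [realRep, hUcol, u, Omega, mulVec, dotProduct, Fintype.sum_sum_type, one_apply]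

lemma IsPassive.fromBlocks_mul_transpose {n₁ n₂ : ℕ}
    {O_A : Matrix (Fin n₁ ⊕ Fin n₁) (Fin n₁ ⊕ Fin n₁) ℝ}
    {O_B : Matrix (Fin n₂ ⊕ Fin n₂) (Fin n₂ ⊕ Fin n₂) ℝ} (hA : O_A.IsPassive)
    (hB : O_B.IsPassive) : fromBlocks O_A 0 0 O_B * (fromBlocks O_A 0 0 O_B)ᵀ = 1 := by
  simp [fromBlocks_transpose, fromBlocks_multiply, mul_eq_one_comm.mp hA.1,
    mul_eq_one_comm.mp hB.1]

section CommRing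

variable {R : Type*} [Fintype ι] [CommRing R]

lemma toBlocks₁₁_mul_eq_neg_of_mul_fromBlocks {κ : Type*} [Fintype κ]
    {M : Matrix (ι ⊕ κ) (ι ⊕ κ) R} {J₁ : Matrix ι ι R} {J₂ : Matrix κ κ R}
    (h : M * fromBlocks J₁ 0 0 J₂ = -(fromBlocks J₁ 0 0 J₂ * M)) :
    M.toBlocks₁₁ * J₁ = -(J₁ * M.toBlocks₁₁) := by
  rw [← fromBlocks_toBlocks M, fromBlocks_multiply, fromBlocks_multiply, fromBlocks_neg,
    fromBlocks_inj] at h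
  simpa using h.1

lemma isSymm_mul_mul_transpose {K : Matrix ι ι R} (hK : K.IsSymm) (S : Matrix ι ι R) :
    (S * K * Sᵀ).IsSymm := by
  rw [IsSymm, transpose_mul, transpose_mul, transpose_transpose, hK.eq, Matrix.mul_assoc]

variable [DecidableEq ι]

lemma commute_of_orthogonal_of_symplectic {S J : Matrix ι ι R} (hS : Sᵀ * S = 1)
    (hSJ : Sᵀ * J * S = J) : Commute J S := by
  have hS' : S * Sᵀ = 1 := mul_eq_one_comm.mp hS
  calc J * S = S * (Sᵀ * J * S) := by simp only [← Matrix.mul_assoc, hS', Matrix.one_mul]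
    _ = S * J := by rw [hSJ]

lemma mul_add_smul_mul_self_of_anticommute {J A : Matrix ι ι R} (hJ : J * J = -1)
    (hAJ : A * J = -(J * A)) (l m : R) :
    J * (l • 1 + m • A) * (J * (l • 1 + m • A)) = (m * m) • (A * A) - (l * l) • 1 := by
  have hswap : (l • 1 + m • A) * J = J * (l • 1 - m • A) := by
    rw [Matrix.add_mul, Matrix.smul_mul, Matrix.smul_mul, Matrix.one_mul, hAJ, Matrix.mul_sub,
      Matrix.mul_smul, Matrix.mul_smul, Matrix.mul_one, smul_neg, sub_eq_add_neg]
  calc J * (l • 1 + m • A) * (J * (l • 1 + m • A))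
      = J * ((l • 1 + m • A) * J) * (l • 1 + m • A) := by simp only [Matrix.mul_assoc]
    _ = J * J * ((l • 1 - m • A) * (l • 1 + m • A)) := by
      rw [hswap]; simp only [Matrix.mul_assoc]
    _ = (m * m) • (A * A) - (l * l) • 1 := by
      rw [hJ]
      simp only [Matrix.sub_mul, Matrix.mul_add, Matrix.smul_mul, Matrix.mul_smul,
        Matrix.one_mul, Matrix.mul_one, Matrix.neg_mul]
      module

lemma mulVec_swap_of_anticommute {M J : Matrix ι ι R} (hMM : M * M = 1)
    (hMJ : M * J = -(J * M)) {x y : ι → R} (hxy : M *ᵥ x = y) :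
    M *ᵥ y = x ∧ M *ᵥ -(J *ᵥ x) = J *ᵥ y ∧ M *ᵥ (J *ᵥ y) = -(J *ᵥ x) := by
  have hyx : M *ᵥ y = x := by rw [← hxy, mulVec_mulVec, hMM, one_mulVec]
  refine ⟨hyx, ?_, ?_⟩
  · rw [mulVec_neg, mulVec_mulVec, hMJ, neg_mulVec, neg_neg, ← mulVec_mulVec, hxy]
  · rw [mulVec_mulVec, hMJ, neg_mulVec, ← mulVec_mulVec, hyx]

lemma mul_mul_transpose_apply_of_mulVec_row {O M : Matrix ι ι R} (hO : O * Oᵀ = 1) {v w : ι}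
    (h : M *ᵥ O v = O w) (u : ι) : (O * M * Oᵀ) u v = (1 : Matrix ι ι R) u w := by
  calc (O * M * Oᵀ) u v = (O *ᵥ (M *ᵥ O v)) u := by rw [mulVec_mulVec]; rfl
    _ = (O * Oᵀ) u w := by rw [h]; rfl
    _ = (1 : Matrix ι ι R) u w := by rw [hO]

variable {S J K : Matrix ι ι R}

lemma mul_smul_one_add_smul_mul_transpose (hS : S * Sᵀ = 1) (l m : R) :
    S * (l • 1 + m • K) * Sᵀ = l • 1 + m • (S * K * Sᵀ) := by
  rw [Matrix.mul_add, Matrix.add_mul, Matrix.mul_smul, Matrix.smul_mul, Matrix.mul_one, hS,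
    Matrix.mul_smul, Matrix.smul_mul]

lemma mul_mul_transpose_mul_self (hS : Sᵀ * S = 1) (hK : K * K = 1) :
    S * K * Sᵀ * (S * K * Sᵀ) = 1 := by
  calc S * K * Sᵀ * (S * K * Sᵀ) = S * K * (Sᵀ * S) * K * Sᵀ := by simp only [Matrix.mul_assoc]
    _ = 1 := by
      rw [hS, Matrix.mul_one, Matrix.mul_assoc S K K, hK, Matrix.mul_one, mul_eq_one_comm.mp hS]

lemma mul_mul_transpose_mul_eq_neg (hS : Sᵀ * S = 1) (hSJ : Sᵀ * J * S = J)
    (hKJ : K * J = -(J * K)) : S * K * Sᵀ * J = -(J * (S * K * Sᵀ)) := by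
  calc S * K * Sᵀ * J = S * K * (Sᵀ * J * S) * Sᵀ := by
        simp only [Matrix.mul_assoc, mul_eq_one_comm.mp hS, Matrix.mul_one]
    _ = -(S * J * K * Sᵀ) := by
      rw [hSJ, Matrix.mul_assoc S K J, hKJ]
      simp only [Matrix.mul_neg, Matrix.neg_mul, Matrix.mul_assoc]
    _ = -(J * (S * K * Sᵀ)) := by
      rw [← (commute_of_orthogonal_of_symplectic hS hSJ).eq]
      simp only [Matrix.mul_assoc]

lemma dotProduct_mulVec_self_of_orthogonal {M : Matrix ι ι R} (hM : Mᵀ * M = 1) (x : ι → R) :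
    (M *ᵥ x) ⬝ᵥ (M *ᵥ x) = x ⬝ᵥ x := by
  rw [dotProduct_mulVec, ← mulVec_transpose, mulVec_mulVec, hM, one_mulVec]

end CommRing

section Real

variable [Fintype ι] [DecidableEq ι]

lemma exists_dotProduct_self_eq_one_mulVec_eq_zero {A : Matrix ι ι ℝ} (h : A.det = 0) :
    ∃ e, e ⬝ᵥ e = 1 ∧ A *ᵥ e = 0 := by
  obtain ⟨v, hv, hAv⟩ := exists_mulVec_eq_zero_iff.mpr h
  have hpos : 0 < v ⬝ᵥ v := by simpa using dotProduct_star_self_pos_iff.mpr hv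
  refine ⟨(√(v ⬝ᵥ v))⁻¹ • v, ?_, by rw [mulVec_smul, hAv, smul_zero]⟩
  rw [smul_dotProduct, dotProduct_smul, smul_smul, smul_eq_mul, ← sq, inv_pow,
    Real.sq_sqrt hpos.le, inv_mul_cancel₀ hpos.ne']

lemma det_mul_self_add_eq_zero_of_mem_spectrum (B : Matrix ι ι ℝ) (l : ℝ)
    (h : Complex.I * l ∈ spectrum ℂ (B.map Complex.ofReal)) :
    (B * B + (l * l) • 1).det = 0 := by
  set φ := (Complex.ofRealHom : ℝ →+* ℂ).mapMatrix (m := ι)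
  have hfactor : φ (B * B + (l * l) • 1) =
      (algebraMap ℂ _ (Complex.I * l) - φ B) * (algebraMap ℂ _ (-(Complex.I * l)) - φ B) := by
    have hscalar : φ ((l * l) • 1) = ((l * l : ℝ) : ℂ) • 1 := by
      ext i j
      simp [φ, one_apply, apply_ite Complex.ofReal]
    have hI : -(Complex.I * l) * (Complex.I * l) = ((l * l : ℝ) : ℂ) := by
      push_cast; ring_nf; rw [Complex.I_sq]; ring
    rw [map_add, map_mul, hscalar, Algebra.algebraMap_eq_smul_one,
      Algebra.algebraMap_eq_smul_one]
    simp only [sub_mul, mul_sub, Matrix.smul_mul, Matrix.mul_smul, Matrix.one_mul,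
      Matrix.mul_one]
    rw [smul_smul, hI]
    module
  have hsing : (algebraMap ℂ _ (Complex.I * l) - φ B).det = 0 := by
    by_contra hne
    exact spectrum.mem_iff.mp h ((isUnit_iff_isUnit_det _).mpr (isUnit_iff_ne_zero.mpr hne))
  have hdet := congrArg Matrix.det hfactor
  rwa [← RingHom.map_det, det_mul, hsing, zero_mul, Complex.ofRealHom_eq_coe,
    Complex.ofReal_eq_zero] at hdet

lemma det_eq_zero_of_I_mul_mem_spectrum {J A : Matrix ι ι ℝ} (hJ : J * J = -1)
    (hAJ : A * J = -(J * A)) {l m : ℝ} (hm : m ≠ 0)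
    (h : Complex.I * l ∈ spectrum ℂ ((J * (l • 1 + m • A)).map Complex.ofReal)) :
    A.det = 0 := by
  have hdet := det_mul_self_add_eq_zero_of_mem_spectrum _ l h
  rw [mul_add_smul_mul_self_of_anticommute hJ hAJ, sub_add_cancel, det_smul, det_mul] at hdet
  simpa [hm] using hdet

end Real

end Matrix

lemma nonempty_of_dotProduct_self_eq_one {κ : Type*} [Fintype κ] {e : κ ⊕ κ → ℝ}
    (he : e ⬝ᵥ e = 1) : Nonempty κ := by
  by_contra h
  rw [not_nonempty_iff] at h
  simp [dotProduct] at he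

lemma omega_mul_self (n : ℕ) : Omega n * Omega n = -1 := by
  rw [Omega, fromBlocks_multiply, ← fromBlocks_one, fromBlocks_neg]
  simp

lemma omega_transpose_mul_self (n : ℕ) : (Omega n)ᵀ * Omega n = 1 := by
  simp [Omega, fromBlocks_transpose, fromBlocks_multiply]

abbrev QuadIdx (n₁ n₂ : ℕ) : Type := (Fin n₁ ⊕ Fin n₁) ⊕ (Fin n₂ ⊕ Fin n₂)

lemma omegaAB_mulVec_sumElim {n₁ n₂ : ℕ} (p : Fin n₁ ⊕ Fin n₁ → ℝ) (q : Fin n₂ ⊕ Fin n₂ → ℝ) :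
    OmegaAB n₁ n₂ *ᵥ (p ⊕ᵥ q) = Omega n₁ *ᵥ p ⊕ᵥ Omega n₂ *ᵥ q := by
  simp [OmegaAB, fromBlocks_mulVec]

def quadSign (ι : Type*) [DecidableEq ι] : Matrix (ι ⊕ ι) (ι ⊕ ι) ℝ := fromBlocks 1 0 0 (-1)

lemma gammaSqz_eq (n : ℕ) (s : ℝ) :
    GammaSqz n s = ((s + s⁻¹) / 2) • 1 + ((s - s⁻¹) / 2) • quadSign (Fin n) := by
  rw [GammaSqz, quadSign, ← fromBlocks_one, fromBlocks_smul, fromBlocks_smul, fromBlocks_add]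
  congr 1 <;>
    simp only [smul_zero, add_zero, smul_neg, ← sub_eq_add_neg, ← add_smul, ← sub_smul] <;>
    congr 1 <;> ring

lemma quadSign_mul_omega (n : ℕ) :
    quadSign (Fin n) * Omega n = -(Omega n * quadSign (Fin n)) := by
  simp [quadSign, Omega, fromBlocks_multiply, fromBlocks_neg]

def quadSignAB (n₁ n₂ : ℕ) : Matrix (QuadIdx n₁ n₂) (QuadIdx n₁ n₂) ℝ :=
  fromBlocks (quadSign (Fin n₁)) 0 0 (quadSign (Fin n₂))

lemma gammaSqzAB_eq (n₁ n₂ : ℕ) (s : ℝ) :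
    GammaSqzAB n₁ n₂ s = ((s + s⁻¹) / 2) • 1 + ((s - s⁻¹) / 2) • quadSignAB n₁ n₂ := by
  rw [GammaSqzAB, gammaSqz_eq, gammaSqz_eq, quadSignAB, ← fromBlocks_one (l := Fin n₁ ⊕ Fin n₁),
    fromBlocks_smul, fromBlocks_smul, fromBlocks_add]
  simp

lemma isSymm_quadSignAB (n₁ n₂ : ℕ) : (quadSignAB n₁ n₂).IsSymm := by
  simp [quadSignAB, quadSign, IsSymm, fromBlocks_transpose]

lemma quadSignAB_mul_self (n₁ n₂ : ℕ) : quadSignAB n₁ n₂ * quadSignAB n₁ n₂ = 1 := by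
  simp [quadSignAB, quadSign, fromBlocks_multiply, fromBlocks_one]

lemma quadSignAB_mul_omegaAB (n₁ n₂ : ℕ) :
    quadSignAB n₁ n₂ * OmegaAB n₁ n₂ = -(OmegaAB n₁ n₂ * quadSignAB n₁ n₂) := by
  simp [quadSignAB, OmegaAB, fromBlocks_multiply, fromBlocks_neg, quadSign_mul_omega]

lemma sub_inv_div_two_ne_zero {s : ℝ} (hs : 0 < s) (hs1 : s ≠ 1) : (s - s⁻¹) / 2 ≠ 0 := by
  intro h
  field_simp at h
  have : (s - 1) * (s + 1) = 0 := by linarith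
  rcases mul_eq_zero.mp this with h1 | h1
  · exact hs1 (by linarith)
  · linarith

lemma det_toBlocks₁₁_eq_zero_of_mem_spectrum {n₁ n₂ : ℕ}
    {M : Matrix (QuadIdx n₁ n₂) (QuadIdx n₁ n₂) ℝ}
    (hMJ : M * OmegaAB n₁ n₂ = -(OmegaAB n₁ n₂ * M)) {l m : ℝ} (hm : m ≠ 0)
    (h : Complex.I * l ∈ spectrum ℂ
      ((Omega n₁ * (l • 1 + m • M).submatrix Sum.inl Sum.inl).map Complex.ofReal)) :
    M.toBlocks₁₁.det = 0 := by
  have hblock : (l • 1 + m • M).submatrix Sum.inl Sum.inl = l • 1 + m • M.toBlocks₁₁ := by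
    ext i j
    simp [toBlocks₁₁, one_apply]
  rw [hblock] at h
  exact det_eq_zero_of_I_mul_mem_spectrum (omega_mul_self n₁)
    (toBlocks₁₁_mul_eq_neg_of_mul_fromBlocks hMJ) hm h

section EPR

variable {n₁ n₂ : ℕ}

def IsEPRSwap (N : Matrix (QuadIdx n₁ n₂) (QuadIdx n₁ n₂) ℝ) (a : Fin n₁) (b : Fin n₂) : Prop :=
  ∀ u, N u (.inl (.inl a)) = (1 : Matrix (QuadIdx n₁ n₂) (QuadIdx n₁ n₂) ℝ) u (.inr (.inr b)) ∧
    N u (.inl (.inr a)) = (1 : Matrix (QuadIdx n₁ n₂) (QuadIdx n₁ n₂) ℝ) u (.inr (.inl b)) ∧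
    N u (.inr (.inl b)) = (1 : Matrix (QuadIdx n₁ n₂) (QuadIdx n₁ n₂) ℝ) u (.inl (.inr a)) ∧
    N u (.inr (.inr b)) = (1 : Matrix (QuadIdx n₁ n₂) (QuadIdx n₁ n₂) ℝ) u (.inl (.inl a))

lemma submatrix_pairEmb_eq_gammaEPR {N : Matrix (QuadIdx n₁ n₂) (QuadIdx n₁ n₂) ℝ}
    {a : Fin n₁} {b : Fin n₂} (hN : IsEPRSwap N a b) (l m : ℝ) :
    (l • 1 + m • N).submatrix (pairEmb a b) (pairEmb a b) = GammaEPR l m := by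
  ext (i | i) (j | j) <;> fin_cases i <;> fin_cases j <;>
    simp [pairEmb, GammaEPR, one_apply, (hN _).1, (hN _).2.1, (hN _).2.2.1, (hN _).2.2.2]

lemma apply_eq_zero_of_isEPRSwap {N : Matrix (QuadIdx n₁ n₂) (QuadIdx n₁ n₂) ℝ}
    {a : Fin n₁} {b : Fin n₂} (hNs : N.IsSymm) (hN : IsEPRSwap N a b) (l m : ℝ)
    {u v : QuadIdx n₁ n₂}
    (hu : u ∈ ({.inl (.inl a), .inl (.inr a), .inr (.inl b), .inr (.inr b)} :
      Set (QuadIdx n₁ n₂)))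
    (hv : v ∉ ({.inl (.inl a), .inl (.inr a), .inr (.inl b), .inr (.inr b)} :
      Set (QuadIdx n₁ n₂))) :
    (l • 1 + m • N) u v = 0 ∧ (l • 1 + m • N) v u = 0 := by
  simp only [Set.mem_insert_iff, Set.mem_singleton_iff, not_or] at hu hv
  obtain ⟨hv₁, hv₂, hv₃, hv₄⟩ := hv
  have hvu : (l • 1 + m • N) v u = 0 := by
    rcases hu with rfl | rfl | rfl | rfl <;>
      simp [one_apply, (hN v).1, (hN v).2.1, (hN v).2.2.1, (hN v).2.2.2, hv₁, hv₂, hv₃, hv₄]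
  exact ⟨((isSymm_one.smul l).add (hNs.smul m)).apply v u ▸ hvu, hvu⟩

theorem exists_isPassive_isEPRSwap {M : Matrix (QuadIdx n₁ n₂) (QuadIdx n₁ n₂) ℝ}
    (hM : M.IsSymm) (hMM : M * M = 1) (hMJ : M * OmegaAB n₁ n₂ = -(OmegaAB n₁ n₂ * M))
    {e : Fin n₁ ⊕ Fin n₁ → ℝ} (he : e ⬝ᵥ e = 1) (hAe : M.toBlocks₁₁ *ᵥ e = 0) :
    ∃ O_A O_B, IsPassive O_A ∧ IsPassive O_B ∧ ∃ a b,
      IsEPRSwap (fromBlocks O_A 0 0 O_B * M * (fromBlocks O_A 0 0 O_B)ᵀ) a b := by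
  set g := M.toBlocks₂₁ *ᵥ e
  have hMx : M *ᵥ (e ⊕ᵥ 0) = (0 : Fin n₁ ⊕ Fin n₁ → ℝ) ⊕ᵥ g := by
    conv_lhs => rw [← fromBlocks_toBlocks M]
    simp [fromBlocks_mulVec, hAe, g]
  have hg : g ⬝ᵥ g = 1 := by
    have := dotProduct_mulVec_self_of_orthogonal (by rwa [hM.eq])
      (e ⊕ᵥ (0 : Fin n₂ ⊕ Fin n₂ → ℝ))
    simpa [hMx, he] using this
  obtain ⟨a⟩ := nonempty_of_dotProduct_self_eq_one he
  obtain ⟨b⟩ := nonempty_of_dotProduct_self_eq_one hg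
  obtain ⟨O_A, hA, hAQ, hAP⟩ := exists_isPassive_row_eq a e he
  obtain ⟨O_B, hB, hBQ, hBP⟩ := exists_isPassive_row_eq b (Omega n₂ *ᵥ g)
    (by rwa [dotProduct_mulVec_self_of_orthogonal (omega_transpose_mul_self n₂)])
  set O := fromBlocks O_A 0 0 O_B
  have hO : O * Oᵀ = 1 := hA.fromBlocks_mul_transpose hB
  have hrowQa : O (.inl (.inl a)) = e ⊕ᵥ 0 := by
    ext (j | j) <;> simp [O, hAQ]
  have hrowPa : O (.inl (.inr a)) = -(OmegaAB n₁ n₂ *ᵥ (e ⊕ᵥ 0)) := by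
    ext (j | j) <;> simp [O, hAP, omegaAB_mulVec_sumElim]
  have hrowQb : O (.inr (.inl b)) = OmegaAB n₁ n₂ *ᵥ ((0 : Fin n₁ ⊕ Fin n₁ → ℝ) ⊕ᵥ g) := by
    ext (j | j) <;> simp [O, hBQ, omegaAB_mulVec_sumElim]
  have hrowPb : O (.inr (.inr b)) = (0 : Fin n₁ ⊕ Fin n₁ → ℝ) ⊕ᵥ g := by
    ext (j | j) <;> simp [O, hBP, mulVec_mulVec, omega_mul_self, neg_mulVec]
  obtain ⟨hMy, hMPa, hMQb⟩ := mulVec_swap_of_anticommute hMM hMJ hMx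
  refine ⟨O_A, O_B, hA, hB, a, b, fun u => ⟨?_, ?_, ?_, ?_⟩⟩ <;>
    apply mul_mul_transpose_apply_of_mulVec_row hO
  · rw [hrowQa, hrowPb, hMx]
  · rw [hrowPa, hrowQb, hMPa]
  · rw [hrowQb, hrowPa, hMQb]
  · rw [hrowPb, hrowQa, hMy]

end EPR

theorem routing_criterion_sufficient_general {n₁ n₂ : ℕ}
    (s : ℝ) (hs : 0 < s) (hs1 : s ≠ 1)
    (S : Matrix ((Fin n₁ ⊕ Fin n₁) ⊕ (Fin n₂ ⊕ Fin n₂))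
      ((Fin n₁ ⊕ Fin n₁) ⊕ (Fin n₂ ⊕ Fin n₂)) ℝ)
    (hSorth : Sᵀ * S = 1)
    (hSsymp : Sᵀ * OmegaAB n₁ n₂ * S = OmegaAB n₁ n₂)
    (hspec : (Complex.I * ((s + s⁻¹) / 2)) ∈
      spectrum ℂ
        ((Omega n₁ *
          (S * GammaSqzAB n₁ n₂ s * Sᵀ).submatrix Sum.inl Sum.inl).map Complex.ofReal)) :
    ∃ (O_A : Matrix (Fin n₁ ⊕ Fin n₁) (Fin n₁ ⊕ Fin n₁) ℝ)
      (O_B : Matrix (Fin n₂ ⊕ Fin n₂) (Fin n₂ ⊕ Fin n₂) ℝ),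
      O_Aᵀ * O_A = 1 ∧ O_Aᵀ * Omega n₁ * O_A = Omega n₁ ∧
      O_Bᵀ * O_B = 1 ∧ O_Bᵀ * Omega n₂ * O_B = Omega n₂ ∧
      ∃ (a : Fin n₁) (b : Fin n₂),
        (Matrix.fromBlocks O_A 0 0 O_B * (S * GammaSqzAB n₁ n₂ s * Sᵀ) *
            (Matrix.fromBlocks O_A 0 0 O_B)ᵀ).submatrix (pairEmb a b) (pairEmb a b) =
          GammaEPR ((s + s⁻¹) / 2) ((s - s⁻¹) / 2) ∧
        ∀ u v,
          u ∈ ({Sum.inl (Sum.inl a), Sum.inl (Sum.inr a), Sum.inr (Sum.inl b),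
              Sum.inr (Sum.inr b)} :
            Set ((Fin n₁ ⊕ Fin n₁) ⊕ (Fin n₂ ⊕ Fin n₂))) →
          v ∉ ({Sum.inl (Sum.inl a), Sum.inl (Sum.inr a), Sum.inr (Sum.inl b),
              Sum.inr (Sum.inr b)} :
            Set ((Fin n₁ ⊕ Fin n₁) ⊕ (Fin n₂ ⊕ Fin n₂))) →
          (Matrix.fromBlocks O_A 0 0 O_B * (S * GammaSqzAB n₁ n₂ s * Sᵀ) *
            (Matrix.fromBlocks O_A 0 0 O_B)ᵀ) u v = 0 ∧
          (Matrix.fromBlocks O_A 0 0 O_B * (S * GammaSqzAB n₁ n₂ s * Sᵀ) *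
            (Matrix.fromBlocks O_A 0 0 O_B)ᵀ) v u = 0 := by
  rw [show ((s : ℂ) + ((s⁻¹ : ℝ) : ℂ)) / 2 = (((s + s⁻¹) / 2 : ℝ) : ℂ) by push_cast; ring] at hspec
  have hm := sub_inv_div_two_ne_zero hs hs1
  set l := (s + s⁻¹) / 2
  set m := (s - s⁻¹) / 2
  set M := S * quadSignAB n₁ n₂ * Sᵀ
  have hΓ : S * GammaSqzAB n₁ n₂ s * Sᵀ = l • 1 + m • M := by
    rw [gammaSqzAB_eq, mul_smul_one_add_smul_mul_transpose (mul_eq_one_comm.mp hSorth)]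
  have hMs : M.IsSymm := isSymm_mul_mul_transpose (isSymm_quadSignAB n₁ n₂) S
  have hMJ : M * OmegaAB n₁ n₂ = -(OmegaAB n₁ n₂ * M) :=
    mul_mul_transpose_mul_eq_neg hSorth hSsymp (quadSignAB_mul_omegaAB n₁ n₂)
  have hdet : M.toBlocks₁₁.det = 0 :=
    det_toBlocks₁₁_eq_zero_of_mem_spectrum hMJ hm (by rwa [hΓ] at hspec)
  obtain ⟨e, he, hAe⟩ := exists_dotProduct_self_eq_one_mulVec_eq_zero hdet
  obtain ⟨O_A, O_B, hA, hB, a, b, hN⟩ := exists_isPassive_isEPRSwap hMs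
    (mul_mul_transpose_mul_self hSorth (quadSignAB_mul_self n₁ n₂)) hMJ he hAe
  have hΓ' := mul_smul_one_add_smul_mul_transpose (K := M) (hA.fromBlocks_mul_transpose hB) l m
  refine ⟨O_A, O_B, hA.1, hA.2, hB.1, hB.2, a, b, ?_, fun u v hu hv => ?_⟩
  · rw [hΓ, hΓ']
    exact submatrix_pairEmb_eq_gammaEPR hN l m
  · rw [hΓ, hΓ']
    exact apply_eq_zero_of_isEPRSwap (isSymm_mul_mul_transpose hMs _) hN l m hu hv

/-- Sufficiency of the symplectic-spectrum criterion for graph states with equal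
squeezing: if `Γ = S Γ_sqz Sᵀ` for a passive (orthogonal and symplectic) `S`, and
`λ = (s+s⁻¹)/2` is a symplectic eigenvalue of Alice's reduced covariance matrix
`Γ_A`, then local passive transformations `O_A`, `O_B` extract a decoupled EPR pair
`Γ_EPR((s+s⁻¹)/2, (s−s⁻¹)/2)` between some Alice mode `a` and Bob mode `b`. -/
theorem routing_criterion_sufficient {n₁ n₂ : ℕ} (hn₁ : 1 ≤ n₁) (hn₂ : 1 ≤ n₂)
    (s : ℝ) (hs : 0 < s) (hs1 : s ≠ 1)
    (S : Matrix ((Fin n₁ ⊕ Fin n₁) ⊕ (Fin n₂ ⊕ Fin n₂))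
      ((Fin n₁ ⊕ Fin n₁) ⊕ (Fin n₂ ⊕ Fin n₂)) ℝ)
    (hSorth : Sᵀ * S = 1)
    (hSsymp : Sᵀ * OmegaAB n₁ n₂ * S = OmegaAB n₁ n₂)
    (hspec : (Complex.I * ((s + s⁻¹) / 2)) ∈
      spectrum ℂ
        ((Omega n₁ *
          (S * GammaSqzAB n₁ n₂ s * Sᵀ).submatrix Sum.inl Sum.inl).map Complex.ofReal)) :
    ∃ (O_A : Matrix (Fin n₁ ⊕ Fin n₁) (Fin n₁ ⊕ Fin n₁) ℝ)
      (O_B : Matrix (Fin n₂ ⊕ Fin n₂) (Fin n₂ ⊕ Fin n₂) ℝ),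
      O_Aᵀ * O_A = 1 ∧ O_Aᵀ * Omega n₁ * O_A = Omega n₁ ∧
      O_Bᵀ * O_B = 1 ∧ O_Bᵀ * Omega n₂ * O_B = Omega n₂ ∧
      ∃ (a : Fin n₁) (b : Fin n₂),
        (Matrix.fromBlocks O_A 0 0 O_B * (S * GammaSqzAB n₁ n₂ s * Sᵀ) *
            (Matrix.fromBlocks O_A 0 0 O_B)ᵀ).submatrix (pairEmb a b) (pairEmb a b) =
          GammaEPR ((s + s⁻¹) / 2) ((s - s⁻¹) / 2) ∧
        ∀ u v,
          u ∈ ({Sum.inl (Sum.inl a), Sum.inl (Sum.inr a), Sum.inr (Sum.inl b),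
              Sum.inr (Sum.inr b)} :
            Set ((Fin n₁ ⊕ Fin n₁) ⊕ (Fin n₂ ⊕ Fin n₂))) →
          v ∉ ({Sum.inl (Sum.inl a), Sum.inl (Sum.inr a), Sum.inr (Sum.inl b),
              Sum.inr (Sum.inr b)} :
            Set ((Fin n₁ ⊕ Fin n₁) ⊕ (Fin n₂ ⊕ Fin n₂))) →
          (Matrix.fromBlocks O_A 0 0 O_B * (S * GammaSqzAB n₁ n₂ s * Sᵀ) *
            (Matrix.fromBlocks O_A 0 0 O_B)ᵀ) u v = 0 ∧
          (Matrix.fromBlocks O_A 0 0 O_B * (S * GammaSqzAB n₁ n₂ s * Sᵀ) *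
            (Matrix.fromBlocks O_A 0 0 O_B)ᵀ) v u = 0 :=
  routing_criterion_sufficient_general s hs hs1 S hSorth hSsymp hspec
end
end
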